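/- arXiv:2605.19683 — 4 statements merged into one kernel-verified Lean document; each statement's English description precedes it below -/
import Mathlib

section
/- Let ≻ be a strict order on a set X and ≻^bag its bag (multiset) extension, defined as the smallest transitive relation on finite multisets over X such that {x, y_1, …, y_n} ≻^bag {x_1, …, x_m, y_1, …, y_n} whenever x ≻ x_i for all i ∈ {1,…,m} and m ≥ 0. Suppose M = {x_1,…,x_n} and N = {y_1,…,y_m} are finite multisets and there exists j ∈ {1,…,m} such that x_i ⋡ y_j for every i ∈ {1,…,n}. Then M ⋡^bag N. -/
/-- The bag (multiset) extension of a relation `r`: the smallest transitive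
relation such that `{x} ∪ Y ≻ {x₁,…,x_m} ∪ Y` whenever `x ≻ xᵢ` for all `i`
(`m ≥ 0`). -/
inductive BagExt {X : Type} (r : X → X → Prop) : Multiset X → Multiset X → Prop where
  | step (x : X) (ms Y : Multiset X) :
      (∀ y ∈ ms, r x y) → BagExt r (x ::ₘ Y) (ms + Y)
  | trans {A B C : Multiset X} : BagExt r A B → BagExt r B C → BagExt r A C

lemma bagExt_dominate {X : Type} (r : X → X → Prop)
    (htrans : ∀ {a b c}, r a b → r b c → r a c)
    {M N : Multiset X} (hMN : BagExt r M N) :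
    ∀ y ∈ N, ∃ x ∈ M, r x y ∨ x = y := by
  induction hMN with
  | step x ms Y hms =>
    intro z hz
    rcases Multiset.mem_add.mp hz with hz | hz
    · exact ⟨x, Multiset.mem_cons_self _ _, Or.inl (hms z hz)⟩
    · exact ⟨z, Multiset.mem_cons_of_mem hz, Or.inr rfl⟩
  | trans _ _ ih1 ih2 =>
    intro z hz
    obtain ⟨b, hb, hbz⟩ := ih2 z hz
    obtain ⟨a, ha, hab⟩ := ih1 b hb
    refine ⟨a, ha, ?_⟩
    rcases hab with hab | rfl
    · rcases hbz with hbz | rfl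
      · exact Or.inl (htrans hab hbz)
      · exact Or.inl hab
    · exact hbz

/-- If `≻` is a strict order on `X`, `M`, `N` are finite
multisets and there is `y ∈ N` with `x ⋡ y` for every `x ∈ M`, then
`M ⋡^bag N`. -/
theorem bagExt_not_ge {X : Type} (r : X → X → Prop)
    (hirr : ∀ x, ¬ r x x) (htrans : ∀ {a b c}, r a b → r b c → r a c)
    (M N : Multiset X) (y : X) (hy : y ∈ N)
    (h : ∀ x ∈ M, ¬ r x y ∧ x ≠ y) :
    ¬ (BagExt r M N ∨ M = N) := by
  rintro (hMN | rfl)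
  · obtain ⟨x, hx, hxy⟩ := bagExt_dominate r htrans hMN y hy
    rcases hxy with hxy | rfl
    · exact (h x hx).1 hxy
    · exact (h x hx).2 rfl
  · exact (h y hy).2 rfl
end

section
/- If ≻ is a well-founded strict order on a set X, then its bag (multiset) extension ≻^bag on finite multisets over X is also well-founded. -/
/-- One step of the bag order: `N` is obtained from `M` by replacing one
element `x` by finitely many elements smaller than `x`. -/
def Lt1 {X : Type} (r : X → X → Prop) (N M : Multiset X) : Prop :=
  ∃ x ms Y, M = x ::ₘ Y ∧ N = ms + Y ∧ ∀ y ∈ ms, r x y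

lemma acc_cons_aux {X : Type} (r : X → X → Prop) (a : X)
    (H : ∀ b, r a b → ∀ M, Acc (Lt1 r) M → Acc (Lt1 r) (b ::ₘ M))
    (M : Multiset X) (hM : Acc (Lt1 r) M)
    (IH : ∀ M', Lt1 r M' M → Acc (Lt1 r) (a ::ₘ M')) :
    Acc (Lt1 r) (a ::ₘ M) := by
  have key : ∀ ms : Multiset X, (∀ y ∈ ms, r a y) → Acc (Lt1 r) (ms + M) := by
    intro ms
    induction ms using Multiset.induction with
    | empty => intro _; simpa using hM
    | cons k K IHk =>
      intro h
      rw [Multiset.cons_add]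
      exact H k (h k (Multiset.mem_cons_self _ _)) _
        (IHk fun y hy => h y (Multiset.mem_cons_of_mem hy))
  constructor
  rintro N ⟨x, ms, Y, hMY, hN, hms⟩
  rcases (Multiset.cons_eq_cons).1 hMY with ⟨hax, hYM⟩ | ⟨_, cs, hMc, hYc⟩
  · subst hN; subst hYM; subst hax
    exact key ms hms
  · subst hN; subst hYc
    have : ms + (a ::ₘ cs) = a ::ₘ (ms + cs) := by
      rw [Multiset.add_cons]
    rw [this]
    exact IH (ms + cs) ⟨x, ms, cs, hMc, rfl, hms⟩

lemma acc_cons_of_acc {X : Type} (r : X → X → Prop) (a : X)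
    (ha : Acc (fun a b => r b a) a) :
    ∀ M, Acc (Lt1 r) M → Acc (Lt1 r) (a ::ₘ M) := by
  induction ha with
  | intro a _ IHa =>
    intro M hM
    induction hM with
    | intro M hM IHM =>
      exact acc_cons_aux r a (fun b hb M' hM' => IHa b hb M' hM')
        M (Acc.intro M hM) (fun M' h => IHM M' h)

lemma lt1_wf {X : Type} (r : X → X → Prop)
    (hwf : WellFounded (fun a b => r b a)) : WellFounded (Lt1 r) := by
  constructor
  intro M
  induction M using Multiset.induction with
  | empty =>
    constructor
    rintro N ⟨x, ms, Y, h0, -, -⟩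
    exact absurd h0.symm (Multiset.cons_ne_zero)
  | cons a M IH => exact acc_cons_of_acc r a (hwf.apply a) M IH

lemma bagExt_transGen {X : Type} (r : X → X → Prop) {A B : Multiset X}
    (h : BagExt r A B) : Relation.TransGen (Lt1 r) B A := by
  induction h with
  | step x ms Y h => exact .single ⟨x, ms, Y, rfl, rfl, h⟩
  | trans h1 h2 ih1 ih2 => exact ih2.trans ih1

/-- If `≻` is a well-founded strict order on `X` (i.e. there is
no infinite descending `≻`-chain, equivalently the converse relation is
well-founded), then its bag extension `≻^bag` on finite multisets over `X` is
also well-founded. -/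
theorem bagExt_wellFounded {X : Type} (r : X → X → Prop)
    (hirr : ∀ x, ¬ r x x) (htrans : ∀ {a b c}, r a b → r b c → r a c)
    (hwf : WellFounded (fun a b => r b a)) :
    WellFounded (fun A B : Multiset X => BagExt r B A) :=
  Subrelation.wf (fun h => bagExt_transGen r h) ((lt1_wf r hwf).transGen)
end

section
/- Let Σ = Σ_c ⊎ Σ_u and let w be a transfinite weight function assigning to each symbol of Σ_c a weight in ω = {0,1,2,…} and to each symbol of Σ_u a weight in ω_1 = {ω+1, ω+2, …}. Let ≻_tkbo be the transfinite Knuth–Bendix order induced by w and a precedence ≫. Then for every computable term s (all symbols in Σ_c) and every uncomputable term t (containing some symbol of Σ_u), s ⋡_tkbo t. -/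
/-- First-order terms over function symbols `F` and variables `V`. -/
inductive Term (F V : Type) : Type where
  | var : V → Term F V
  | app : F → List (Term F V) → Term F V

/-- All function symbols of the term belong to the set `S`. -/
inductive SymbolsIn {F V : Type} (S : Set F) : Term F V → Prop where
  | var (x : V) : SymbolsIn S (Term.var x)
  | app {f : F} {ts : List (Term F V)} :
      f ∈ S → (∀ t ∈ ts, SymbolsIn S t) → SymbolsIn S (Term.app f ts)

/-- The term contains at least one symbol from `S`. -/
inductive ContainsSym {F V : Type} (S : Set F) : Term F V → Prop where
  | here {f : F} {ts : List (Term F V)} : f ∈ S → ContainsSym S (Term.app f ts)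
  | there {f : F} {ts : List (Term F V)} {t : Term F V} :
      t ∈ ts → ContainsSym S t → ContainsSym S (Term.app f ts)

/-- The term contains no variables (it is ground). -/
inductive IsGround {F V : Type} : Term F V → Prop where
  | app {f : F} {ts : List (Term F V)} :
      (∀ t ∈ ts, IsGround t) → IsGround (Term.app f ts)

/-- Applying a substitution to a term. -/
def applySubst {F V : Type} (σ : V → Term F V) : Term F V → Term F V
  | Term.var x => σ x
  | Term.app f ts => Term.app f (ts.attach.map fun t => applySubst σ t.1)
decreasing_by
  have := List.sizeOf_lt_of_mem t.2
  simp only [Term.app.sizeOf_spec] at *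
  omega

/-- The (ordinal) weight of a term under a transfinite weight function `w` on
symbols and weights `ν` for variables. -/
noncomputable def wt {F V : Type} (w : F → Ordinal.{0}) (ν : V → Ordinal.{0}) :
    Term F V → Ordinal.{0}
  | Term.var x => ν x
  | Term.app f ts => (ts.attach.map fun t => wt w ν t.1).foldr (· + ·) (w f)
decreasing_by
  have := List.sizeOf_lt_of_mem t.2
  simp only [Term.app.sizeOf_spec] at *
  omega

/-- `|s| ≳ |t|`: every grounding instance of `s` weighs at least as much as the
corresponding instance of `t`. -/
def WtGe {F V : Type} (w : F → Ordinal.{0}) (s t : Term F V) : Prop :=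
  ∀ σ : V → Term F V, (∀ x, IsGround (σ x)) →
    wt w (fun _ => 0) (applySubst σ t) ≤ wt w (fun _ => 0) (applySubst σ s)

/-- `|s| > |t|`: every grounding instance of `s` weighs strictly more than the
corresponding instance of `t`. -/
def WtGt {F V : Type} (w : F → Ordinal.{0}) (s t : Term F V) : Prop :=
  ∀ σ : V → Term F V, (∀ x, IsGround (σ x)) →
    wt w (fun _ => 0) (applySubst σ t) < wt w (fun _ => 0) (applySubst σ s)

/-- The transfinite Knuth–Bendix order induced by the weight function `w` and
precedence `prec` (`prec g f` means `f ≫ g`). -/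
inductive TKBO {F V : Type} (w : F → Ordinal.{0}) (prec : F → F → Prop) :
    Term F V → Term F V → Prop where
  | weight {s t : Term F V} : WtGt w s t → TKBO w prec s t
  | prec {f g : F} {ss ts : List (Term F V)} :
      WtGe w (Term.app f ss) (Term.app g ts) → prec g f →
      TKBO w prec (Term.app f ss) (Term.app g ts)
  | lex {f : F} {pre l k : List (Term F V)} {a b : Term F V} :
      WtGe w (Term.app f (pre ++ a :: l)) (Term.app f (pre ++ b :: k)) →
      TKBO w prec a b →
      TKBO w prec (Term.app f (pre ++ a :: l)) (Term.app f (pre ++ b :: k))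

section Aux
variable {F V : Type}

theorem Term.my_ind {P : Term F V → Prop} (hv : ∀ x, P (Term.var x))
    (ha : ∀ f ts, (∀ t ∈ ts, P t) → P (Term.app f ts)) : ∀ u, P u := by
  intro u
  induction u using applySubst.induct with
  | case1 x => exact hv x
  | case2 f ts ih => exact ha f ts fun t ht => ih ⟨t, ht⟩

theorem applySubst_var (σ : V → Term F V) (x : V) :
    applySubst σ (Term.var x) = σ x := by
  rw [applySubst]

theorem applySubst_app (σ : V → Term F V) (f : F) (ts : List (Term F V)) :
    applySubst σ (Term.app f ts) = Term.app f (ts.map (applySubst σ)) := by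
  rw [applySubst]
  simp [List.attach_map_val]

theorem wt_app (w : F → Ordinal.{0}) (ν : V → Ordinal.{0}) (f : F) (ts : List (Term F V)) :
    wt w ν (Term.app f ts) = (ts.map (wt w ν)).foldr (· + ·) (w f) := by
  rw [wt]
  simp [List.attach_map_val]

theorem base_le_foldr (b : Ordinal.{0}) (l : List Ordinal.{0}) :
    b ≤ l.foldr (· + ·) b := by
  induction l with
  | nil => exact le_rfl
  | cons a l ih => exact ih.trans le_add_self

theorem mem_le_foldr (b : Ordinal.{0}) (l : List Ordinal.{0}) :
    ∀ a ∈ l, a ≤ l.foldr (· + ·) b := by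
  induction l with
  | nil => intro a h; simp at h
  | cons c l ih =>
    intro a h
    rcases List.mem_cons.mp h with h | h
    · subst h; exact le_self_add
    · exact (ih a h).trans le_add_self

theorem foldr_mono {α : Type} (b : Ordinal.{0}) (l : List α) (g₁ g₂ : α → Ordinal.{0})
    (h : ∀ t ∈ l, g₁ t ≤ g₂ t) :
    (l.map g₁).foldr (· + ·) b ≤ (l.map g₂).foldr (· + ·) b := by
  induction l with
  | nil => exact le_rfl
  | cons a l ih =>
    exact add_le_add (h a List.mem_cons_self)
      (ih fun t ht => h t (List.mem_cons_of_mem a ht))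

theorem ground_computable_wt_lt (Sc : Set F) (w : F → Ordinal.{0})
    (hwc : ∀ f ∈ Sc, w f < Ordinal.omega0) {u : Term F V}
    (hg : IsGround u) (hc : SymbolsIn Sc u) : wt w (fun _ => 0) u < Ordinal.omega0 := by
  induction hg with
  | app hts ih =>
    cases hc with
    | app hf hsc =>
      rw [wt_app]
      rename_i f ts
      have : ∀ a ∈ ts.map (wt w (fun _ => 0)), a < Ordinal.omega0 := by
        intro a ha
        rcases List.mem_map.mp ha with ⟨t, ht, rfl⟩
        exact ih t ht (hsc t ht)
      clear ih hsc hts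
      generalize ts.map (wt w fun _ => 0) = l at this
      induction l with
      | nil => exact hwc f hf
      | cons a l ihl =>
        exact Ordinal.principal_add_omega0 (this a List.mem_cons_self)
          (ihl fun x hx => this x (List.mem_cons_of_mem a hx))

theorem contains_wt_ge (S : Set F) (w : F → Ordinal.{0}) (ν : V → Ordinal.{0})
    {u : Term F V} (h : ContainsSym S u) : ∃ f ∈ S, w f ≤ wt w ν u := by
  induction h with
  | here hf =>
    exact ⟨_, hf, by rw [wt_app]; exact base_le_foldr _ _⟩
  | there ht _ ih =>
    rcases ih with ⟨f, hf, hle⟩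
    refine ⟨f, hf, hle.trans ?_⟩
    rw [wt_app]
    exact mem_le_foldr _ _ _ (List.mem_map.mpr ⟨_, ht, rfl⟩)

theorem containsSym_applySubst (S : Set F) (σ : V → Term F V) {u : Term F V}
    (h : ContainsSym S u) : ContainsSym S (applySubst σ u) := by
  induction h with
  | here hf => rw [applySubst_app]; exact ContainsSym.here hf
  | there ht _ ih =>
    rw [applySubst_app]
    exact ContainsSym.there (List.mem_map.mpr ⟨_, ht, rfl⟩) ih

theorem isGround_applySubst (σ : V → Term F V) (hσ : ∀ x, IsGround (σ x)) :
    ∀ u : Term F V, IsGround (applySubst σ u) := by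
  intro u
  induction u using Term.my_ind with
  | hv x => rw [applySubst_var]; exact hσ x
  | ha f ts ih =>
    rw [applySubst_app]
    exact IsGround.app fun t ht => by
      rcases List.mem_map.mp ht with ⟨a, ha, rfl⟩
      exact ih a ha

theorem symbolsIn_applySubst (S : Set F) (σ : V → Term F V)
    (hσ : ∀ x, SymbolsIn S (σ x)) : ∀ u : Term F V, SymbolsIn S u →
    SymbolsIn S (applySubst σ u) := by
  intro u
  induction u using Term.my_ind with
  | hv x => intro _; rw [applySubst_var]; exact hσ x
  | ha f ts ih =>
    intro h
    cases h with
    | app hf hts =>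
      rw [applySubst_app]
      exact SymbolsIn.app hf fun t ht => by
        rcases List.mem_map.mp ht with ⟨a, ha, rfl⟩
        exact ih a ha (hts a ha)

theorem wt_subst_mono (w : F → Ordinal.{0}) (σ₁ σ₂ : V → Term F V)
    (h : ∀ y, wt w (fun _ => 0) (σ₁ y) ≤ wt w (fun _ => 0) (σ₂ y)) :
    ∀ u : Term F V, wt w (fun _ => 0) (applySubst σ₁ u) ≤ wt w (fun _ => 0) (applySubst σ₂ u) := by
  intro u
  induction u using Term.my_ind with
  | hv x => rw [applySubst_var, applySubst_var]; exact h x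
  | ha f ts ih =>
    rw [applySubst_app, applySubst_app, wt_app, wt_app, List.map_map, List.map_map]
    exact foldr_mono _ ts _ _ fun t ht => ih t ht

theorem not_symbolsIn_containsSym (Sc Su : Set F) (hpart : ∀ f, f ∈ Sc ↔ f ∉ Su)
    {u : Term F V} (hs : SymbolsIn Sc u) (hc : ContainsSym Su u) : False := by
  induction hc with
  | here hf => cases hs with
    | app hf' _ => exact (hpart _).mp hf' hf
  | there ht _ ih => cases hs with
    | app _ hts => exact ih (hts _ ht)

end Aux


theorem main_app {F V : Type} (Sc Su : Set F) (hpart : ∀ f, f ∈ Sc ↔ f ∉ Su)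
    (w : F → Ordinal.{0})
    (hwc : ∀ f ∈ Sc, w f < Ordinal.omega0)
    (hwu : ∀ f ∈ Su, Ordinal.omega0 < w f)
    {f : F} {ss : List (Term F V)} {t : Term F V}
    (hs : SymbolsIn Sc (Term.app f ss)) (ht : ContainsSym Su t)
    (hge : WtGe w (Term.app f ss) t) : False := by
  cases hs with
  | app hf hss =>
    set σ : V → Term F V := fun _ => Term.app f [] with hσdef
    have hσg : ∀ x, IsGround (σ x) := fun _ => IsGround.app (by simp)
    have hσc : ∀ x, SymbolsIn Sc (σ x) := fun _ => SymbolsIn.app hf (by simp)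
    have h1 : wt w (fun _ => 0) (applySubst σ (Term.app f ss)) < Ordinal.omega0 :=
      ground_computable_wt_lt Sc w hwc (isGround_applySubst σ hσg _)
        (symbolsIn_applySubst Sc σ hσc _ (SymbolsIn.app hf hss))
    obtain ⟨f₀, hf₀, hle⟩ := contains_wt_ge Su w (fun _ => 0)
      (containsSym_applySubst Su σ ht)
    have h2 := hge σ hσg
    exact (h1.trans ((hwu f₀ hf₀).trans_le (hle.trans h2))).false

/-- For a transfinite KBO whose weight function gives finite
weights (below `ω`) to computable symbols and weights above `ω` to uncomputable
symbols, no computable term `s` satisfies `s ⪰_tkbo t` for an uncomputable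
term `t`. -/
theorem tkbo_computable_not_ge_uncomputable {F V : Type}
    (Sc Su : Set F) (hpart : ∀ f, f ∈ Sc ↔ f ∉ Su)
    (w : F → Ordinal.{0}) (prec : F → F → Prop)
    (hwc : ∀ f ∈ Sc, w f < Ordinal.omega0)
    (hwu : ∀ f ∈ Su, Ordinal.omega0 < w f)
    (s t : Term F V) (hs : SymbolsIn Sc s) (ht : ContainsSym Su t) :
    ¬ (TKBO w prec s t ∨ s = t) := by
  intro h
  cases t with
  | var x => cases ht
  | app g ts =>
    rcases h with h | rfl
    case inr => exact not_symbolsIn_containsSym Sc Su hpart hs ht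
    cases h with
    | prec hge _ => exact main_app Sc Su hpart w hwc hwu hs ht hge
    | lex hge _ => exact main_app Sc Su hpart w hwc hwu hs ht hge
    | weight hgt =>
      cases s with
      | app f ss =>
        exact main_app Sc Su hpart w hwc hwu hs ht (fun σ hσ => (hgt σ hσ).le)
      | var x =>
        set g₀ : Term F V := Term.app g [] with hg₀def
        have hg₀ : IsGround g₀ := IsGround.app (by simp)
        set G : Term F V := applySubst (fun _ => g₀) (Term.app g ts) with hGdef
        have hG : IsGround G := isGround_applySubst _ (fun _ => hg₀) _
        have h1 := hgt (fun _ => G) (fun _ => hG)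
        have hvar : applySubst (fun _ : V => G) (Term.var x) = G := by rw [applySubst]
        rw [hvar] at h1
        have hwg₀ : wt w (fun _ => 0) g₀ = w g := by rw [hg₀def, wt_app]; simp
        have hwG : w g ≤ wt w (fun _ => 0) G := by
          rw [hGdef, applySubst_app, wt_app]; exact base_le_foldr _ _
        have h2 : wt w (fun _ => 0) G ≤
            wt w (fun _ => 0) (applySubst (fun _ => G) (Term.app g ts)) := by
          rw [hGdef]
          exact wt_subst_mono w _ _ (fun y => by rw [hwg₀]; exact hwG) _
        exact (h1.trans_le h2).false
end

section
/- Let ≻ be a strict order on literals such that no computable literal is ≻ or = any uncomputable literal. Let ≻^bag be the induced multiset order on clauses. Then for any uncomputable clause C_1 (containing at least one uncomputable literal) and any computable clause C_2 (all literals computable), C_2 ⋡^bag C_1. -/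
/-- Let `≻` be a strict order on literals such that no
computable literal is `≻` or equal to any uncomputable literal. Then for any
uncomputable clause `C₁` (containing at least one uncomputable literal) and any
computable clause `C₂` (all of whose literals are computable), `C₂ ⋡^bag C₁`
under the induced multiset order on clauses. -/
theorem computable_clause_not_ge_uncomputable {L : Type}
    (r : L → L → Prop) (comp : L → Prop)
    (hirr : ∀ x, ¬ r x x) (htrans : ∀ {a b c}, r a b → r b c → r a c)
    (hsep : ∀ K M, comp K → ¬ comp M → ¬ r K M ∧ K ≠ M)
    (C₁ C₂ : Multiset L)
    (h1 : ∃ M ∈ C₁, ¬ comp M) (h2 : ∀ K ∈ C₂, comp K) :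
    ¬ (BagExt r C₂ C₁ ∨ C₂ = C₁) := by
  have key : ∀ {A B : Multiset L}, BagExt r A B →
      ∀ b ∈ B, ¬ comp b → ∃ a ∈ A, ¬ comp a := by
    intro A B h
    induction h with
    | step x ms Y hr =>
      intro b hb hnb
      rcases Multiset.mem_add.mp hb with h | h
      · refine ⟨x, Multiset.mem_cons_self _ _, fun hcx => ?_⟩
        exact (hsep x b hcx hnb).1 (hr b h)
      · exact ⟨b, Multiset.mem_cons_of_mem h, hnb⟩
    | trans h1 h2 ih1 ih2 =>
      intro b hb hnb
      obtain ⟨a, ha, hna⟩ := ih2 b hb hnb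
      exact ih1 a ha hna
  rintro (h | rfl)
  · obtain ⟨M, hM, hnM⟩ := h1
    obtain ⟨a, ha, hna⟩ := key h M hM hnM
    exact hna (h2 a ha)
  · obtain ⟨M, hM, hnM⟩ := h1
    exact hnM (h2 M hM)
end
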